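/- Let F₁, ..., F_k be finitely many subspaces of a finite-dimensional vector space E over a field of characteristic zero. For every m ≥ 0, Sym^m(⋂ⱼ Fⱼ) = ⋂ⱼ Sym^m(Fⱼ) as subspaces of Sym^m(E). -/

import Mathlib

/-- The `m`-th symmetric power of a subspace `F` of `E`, viewed (in characteristic zero,
via polarization) as the subspace of the `m`-th tensor power of `E` spanned by the tensors
`v ⊗ v ⊗ ... ⊗ v` for `v ∈ F`. -/
noncomputable def symPow (K : Type*) [Field K] {E : Type*} [AddCommGroup E] [Module K E]
    (m : ℕ) (F : Submodule K E) : Submodule K (PiTensorProduct K (fun _ : Fin m => E)) :=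
  Submodule.span K {x | ∃ v ∈ F, x = PiTensorProduct.tprod K (fun _ : Fin m => v)}

/-!
Given subspaces `F` and `G`, choose a linear endomorphism `r` of `E` that is the identity on `G`
and maps `F` into `F ⊓ G`. Its diagonal tensor power `r ⊗ ⋯ ⊗ r` fixes `Sym^m G` pointwise and
maps `Sym^m F` into `Sym^m (F ⊓ G)`; hence every element of `Sym^m F ⊓ Sym^m G` lies in
`Sym^m (F ⊓ G)`. The case of finitely many subspaces follows by folding `⊓`.
-/

namespace Submodule

variable {K E : Type*} [DivisionRing K] [AddCommGroup E] [Module K E]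

/-- Take a complement `F'` of `F ⊓ G` in `F`, enlarge it to a complement `C` of `G`, and project
onto `G` along `C`. -/
theorem exists_linearMap_eqOn_id_mapsTo_inf (F G : Submodule K E) :
    ∃ r : E →ₗ[K] E, Set.EqOn r id G ∧ Set.MapsTo r F (F ⊓ G) := by
  obtain ⟨F', hdisj, hsup⟩ :=
    IsModularLattice.exists_disjoint_and_sup_eq (inf_le_left : F ⊓ G ≤ F)
  have hF'G : Disjoint F' G := by
    refine disjoint_iff_inf_le.2 fun v ⟨hvF', hvG⟩ => hdisj.le_bot ⟨?_, hvF'⟩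
    exact ⟨hsup ▸ mem_sup_right hvF', hvG⟩
  obtain ⟨C, hF'C, hCG⟩ := hF'G.exists_isCompl
  have hfix : Set.EqOn (G.projection C hCG.symm) id G := fun v hv =>
    projection_apply_of_mem_left _ hv
  refine ⟨G.projection C hCG.symm, hfix, ?_⟩
  suffices F ≤ (F ⊓ G).comap (G.projection C hCG.symm) from this
  refine hsup.ge.trans (sup_le (fun v hv => ?_) (fun v hv => ?_))
  · simpa [hfix hv.2] using hv
  · simp [projection_apply_of_mem_right _ (hF'C hv)]

end Submodule

section SymPow

open PiTensorProduct

variable {K E E' : Type*} [Field K] [AddCommGroup E] [Module K E] [AddCommGroup E'] [Module K E']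
  {m : ℕ}

theorem symPow_mono {F G : Submodule K E} (h : F ≤ G) : symPow K m F ≤ symPow K m G :=
  Submodule.span_mono fun _ ⟨v, hv, hx⟩ => ⟨v, h hv, hx⟩

theorem symPow_map (f : E →ₗ[K] E') (F : Submodule K E) :
    (symPow K m F).map (map fun _ => f) = symPow K m (F.map f) := by
  rw [symPow, symPow, Submodule.map_span]
  congr 1
  ext x
  simp [map_tprod, eq_comm]

theorem map_apply_eq_self_of_mem_symPow {f : E →ₗ[K] E} {G : Submodule K E}
    (hf : Set.EqOn f id G) {x} (hx : x ∈ symPow K m G) : map (fun _ => f) x = x := by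
  refine (Submodule.span_le (p := LinearMap.eqLocus _ LinearMap.id)).2 ?_ hx
  rintro _ ⟨v, hv, rfl⟩
  simp [map_tprod, hf hv]

theorem symPow_inf (F G : Submodule K E) :
    symPow K m (F ⊓ G) = symPow K m F ⊓ symPow K m G := by
  refine le_antisymm (le_inf (symPow_mono inf_le_left) (symPow_mono inf_le_right)) ?_
  rintro x ⟨hxF, hxG⟩
  obtain ⟨r, hrG, hrF⟩ := Submodule.exists_linearMap_eqOn_id_mapsTo_inf F G
  have hmap : (symPow K m F).map (map fun _ => r) ≤ symPow K m (F ⊓ G) :=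
    symPow_map r F ▸ symPow_mono (Submodule.map_le_iff_le_comap.2 fun v hv => hrF hv)
  rw [← map_apply_eq_self_of_mem_symPow hrG hxG]
  exact hmap ⟨x, hxF, rfl⟩

theorem symPow_iInf {ι : Type*} [Finite ι] [Nonempty ι] (F : ι → Submodule K E) :
    symPow K m (⨅ i, F i) = ⨅ i, symPow K m (F i) := by
  have := Fintype.ofFinite ι
  rw [← Finset.inf'_univ_eq_ciInf, ← Finset.inf'_univ_eq_ciInf]
  exact Finset.apply_inf'_eq_inf'_comp _ _ fun _ _ => symPow_inf _ _

end SymPow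

theorem stmt5_general {K E : Type*} [Field K] [AddCommGroup E] [Module K E]
    (k : ℕ) (hk : 0 < k) (F : Fin k → Submodule K E) (m : ℕ) :
    symPow K m (⨅ j, F j) = ⨅ j, symPow K m (F j) :=
  have : Nonempty (Fin k) := ⟨⟨0, hk⟩⟩
  symPow_iInf F

/-- Let `F₁, ..., F_k` be finitely many (`k ≥ 1`) subspaces of a
finite-dimensional vector space `E` over a field of characteristic zero. For every
`m ≥ 0`, `Sym^m(⋂ⱼ Fⱼ) = ⋂ⱼ Sym^m(Fⱼ)` as subspaces of `Sym^m(E)`. -/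
theorem stmt5 {K E : Type*} [Field K] [CharZero K] [AddCommGroup E] [Module K E]
    [FiniteDimensional K E] (k : ℕ) (hk : 0 < k) (F : Fin k → Submodule K E) (m : ℕ) :
    symPow K m (⨅ j, F j) = ⨅ j, symPow K m (F j) :=
  stmt5_general k hk F m
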